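/- arXiv:1207.2560 — 8 statements merged into one kernel-verified Lean document; each statement's English description precedes it below -/
import Mathlib

section
/- Let G be a group and ω a 𝕋-valued 2-cocycle on G. Define v : G → 𝕋 by v(g) = ω(g⁻¹,g)·ω(e,e). Then for all g,h ∈ G one has ω(h⁻¹,g⁻¹) = \overline{ω(g,h)}·v(g)·v(h)·\overline{v(gh)}; that is, the cocycles ω̃(g,h) = ω(h⁻¹,g⁻¹) and ω̄(g,h) = \overline{ω(g,h)} are cohomologous via the function v. -/
/-!
The cocycle identity at `(h⁻¹, g⁻¹, g)` and at `((gh)⁻¹, g, h)`, together with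
`ω(g, 1) = ω(1, 1)`, gives `ω(h⁻¹, g⁻¹) ω(g, h) ω((gh)⁻¹, gh) = ω(g⁻¹, g) ω(h⁻¹, h) ω(1, 1)`
in any abelian group of coefficients. On `𝕋` inversion is complex conjugation.
-/

def IsMulTwoCocycle {G A : Type*} [Mul G] [Mul A] (ω : G → G → A) : Prop :=
  ∀ g h k, ω g h * ω (g * h) k = ω g (h * k) * ω h k

namespace IsMulTwoCocycle

variable {G A : Type*} [Group G]

section CancelCommMonoid

variable [CancelCommMonoid A] {ω : G → G → A}

theorem apply_one_right (hω : IsMulTwoCocycle ω) (g : G) : ω g 1 = ω 1 1 := by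
  simpa only [mul_one, one_mul, mul_right_inj] using hω g 1 1

theorem apply_inv_inv_mul (hω : IsMulTwoCocycle ω) (g h : G) :
    ω h⁻¹ g⁻¹ * ω g h * ω (g * h)⁻¹ (g * h) = ω g⁻¹ g * ω h⁻¹ h * ω 1 1 := by
  have h₁ := hω h⁻¹ g⁻¹ g
  rw [inv_mul_cancel, hω.apply_one_right, ← mul_inv_rev] at h₁
  have h₂ := hω (g * h)⁻¹ g h
  rw [show (g * h)⁻¹ * g = h⁻¹ by group] at h₂
  calc ω h⁻¹ g⁻¹ * ω g h * ω (g * h)⁻¹ (g * h)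
      = ω h⁻¹ g⁻¹ * ω (g * h)⁻¹ g * ω h⁻¹ h := by
        rw [mul_assoc, mul_comm (ω g h), ← h₂, mul_assoc]
    _ = ω g⁻¹ g * ω h⁻¹ h * ω 1 1 := by rw [h₁]; ac_rfl

end CancelCommMonoid

theorem apply_inv_inv [CommGroup A] {ω : G → G → A} (hω : IsMulTwoCocycle ω) (g h : G) :
    ω h⁻¹ g⁻¹ = (ω g h)⁻¹ * (ω g⁻¹ g * ω 1 1) * (ω h⁻¹ h * ω 1 1) *
      (ω (g * h)⁻¹ (g * h) * ω 1 1)⁻¹ := by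
  rw [eq_comm, mul_inv_eq_iff_eq_mul, mul_assoc, mul_assoc, inv_mul_eq_iff_eq_mul,
    show ω g h * (ω h⁻¹ g⁻¹ * (ω (g * h)⁻¹ (g * h) * ω 1 1)) =
      ω h⁻¹ g⁻¹ * ω g h * ω (g * h)⁻¹ (g * h) * ω 1 1 by ac_rfl,
    hω.apply_inv_inv_mul]
  ac_rfl

end IsMulTwoCocycle

/-- Let `G` be a group and `ω` a `𝕋`-valued 2-cocycle on `G`. Define `v(g) = ω(g⁻¹,g)·ω(e,e)`.
Then `ω(h⁻¹,g⁻¹) = conj(ω(g,h))·v(g)·v(h)·conj(v(gh))` for all `g,h ∈ G`; that is, the cocycles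
`ω̃(g,h) = ω(h⁻¹,g⁻¹)` and `ω̄(g,h) = conj(ω(g,h))` are cohomologous via `v`. -/
theorem stmt_2 {G : Type*} [Group G] (ω : G → G → ℂ)
    (habs : ∀ g h : G, ‖ω g h‖ = 1)
    (hcoc : ∀ g h k : G, ω g h * ω (g * h) k = ω g (h * k) * ω h k)
    (v : G → ℂ) (hv : ∀ g : G, v g = ω g⁻¹ g * ω 1 1) :
    ∀ g h : G, ω h⁻¹ g⁻¹ =
      starRingEnd ℂ (ω g h) * v g * v h * starRingEnd ℂ (v (g * h)) := by
  intro g h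
  let ωT : G → G → Circle := fun g h => ⟨ω g h, mem_sphere_zero_iff_norm.2 (habs g h)⟩
  have hωT : IsMulTwoCocycle ωT := fun g h k => Circle.ext (hcoc g h k)
  have key := congrArg ((↑) : Circle → ℂ) (hωT.apply_inv_inv g h)
  simpa only [Circle.coe_mul, Circle.coe_inv_eq_conj, hv] using key
end

section
/- Let G be a second countable locally compact Hausdorff topological group with a right Haar measure ν (a nonzero right-invariant Radon measure) and let ω be a Borel 2-cocycle on G. Then for every g ∈ G there is a unique unitary operator ρ^{ω̃}_g on L²(G,ν) such that for every ξ ∈ L²(G,ν) one has (ρ^{ω̃}_g ξ)(s) = ω(g⁻¹,s⁻¹)·ξ(sg) for ν-almost every s ∈ G; moreover ρ^{ω̃}_g ∘ ρ^{ω̃}_h = ω̃(g,h)·ρ^{ω̃}_{gh} for all g,h ∈ G, where ω̃(g,h) = ω(h⁻¹,g⁻¹). -/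
/-!
`ρ_g` is right translation by `g`, an isometry of `L^p(ν)` because `ν` is right invariant,
followed by multiplication with the unimodular function `s ↦ ω(g⁻¹, s⁻¹)`, an isometry whose
inverse is multiplication with the reciprocal. It is unique because an element of `L^p` is
determined by its a.e. values. Right translation also preserves null sets, so
`ρ_g (ρ_h ξ)` and `ω(h⁻¹, g⁻¹) • ρ_{gh} ξ` can be compared pointwise a.e., where they agree
by the cocycle identity at `(h⁻¹, g⁻¹, s⁻¹)`.
-/

open MeasureTheory
open scoped ENNReal

namespace MeasureTheory.Lp

section UnimodularSMul

variable {α 𝕜 E : Type*} [MeasurableSpace α] {μ : Measure α} [NormedField 𝕜]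
  [NormedAddCommGroup E] [NormedSpace 𝕜 E] {p : ℝ≥0∞} {m : α → 𝕜}

theorem eLpNorm_unimodular_smul (hm1 : ∀ᵐ x ∂μ, ‖m x‖ = 1) (f : α → E) :
    eLpNorm (m • f) p μ = eLpNorm f p μ :=
  eLpNorm_congr_norm_ae <| hm1.mono fun x hx => by simp [norm_smul, hx]

theorem memLp_unimodular_smul (hm : AEStronglyMeasurable m μ) (hm1 : ∀ᵐ x ∂μ, ‖m x‖ = 1)
    {f : α → E} (hf : MemLp f p μ) : MemLp (m • f) p μ :=
  ⟨hm.smul hf.1, (eLpNorm_unimodular_smul hm1 f).trans_lt hf.2⟩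

variable [Fact (1 ≤ p)]

variable (E p) in
noncomputable def unimodularSMulₗᵢ (hm : AEStronglyMeasurable m μ) (hm1 : ∀ᵐ x ∂μ, ‖m x‖ = 1) :
    Lp E p μ →ₗᵢ[𝕜] Lp E p μ where
  toFun ξ := (memLp_unimodular_smul hm hm1 (Lp.memLp ξ)).toLp _
  map_add' ξ η := by
    rw [← MemLp.toLp_add]
    refine MemLp.toLp_congr _ _ ?_
    filter_upwards [Lp.coeFn_add ξ η] with x hx
    simp only [Pi.smul_apply', Pi.add_apply, hx, smul_add]
  map_smul' c ξ := by
    rw [← MemLp.toLp_const_smul]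
    refine MemLp.toLp_congr _ _ ?_
    filter_upwards [Lp.coeFn_smul c ξ] with x hx
    simp [hx, smul_comm c]
  norm_map' ξ := by
    simp [Lp.norm_def, eLpNorm_congr_ae (MemLp.coeFn_toLp _), eLpNorm_unimodular_smul hm1]

theorem coeFn_unimodularSMulₗᵢ (hm : AEStronglyMeasurable m μ) (hm1 : ∀ᵐ x ∂μ, ‖m x‖ = 1)
    (ξ : Lp E p μ) : unimodularSMulₗᵢ E p hm hm1 ξ =ᵐ[μ] m • ⇑ξ :=
  MemLp.coeFn_toLp (memLp_unimodular_smul hm hm1 (Lp.memLp ξ))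

theorem unimodularSMulₗᵢ_leftInverse {m' : α → 𝕜} (hm : AEStronglyMeasurable m μ)
    (hm1 : ∀ᵐ x ∂μ, ‖m x‖ = 1) (hm' : AEStronglyMeasurable m' μ) (hm1' : ∀ᵐ x ∂μ, ‖m' x‖ = 1)
    (hmm' : ∀ᵐ x ∂μ, m' x * m x = 1) :
    Function.LeftInverse (unimodularSMulₗᵢ E p hm' hm1') (unimodularSMulₗᵢ E p hm hm1) := by
  intro ξ
  ext1
  filter_upwards [coeFn_unimodularSMulₗᵢ hm' hm1' (unimodularSMulₗᵢ E p hm hm1 ξ),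
    coeFn_unimodularSMulₗᵢ hm hm1 ξ, hmm'] with x h' h hx
  simp only [h', Pi.smul_apply', h, smul_smul, hx, one_smul]

variable (E p) in
noncomputable def unimodularSMul (hm : AEStronglyMeasurable m μ) (hm1 : ∀ᵐ x ∂μ, ‖m x‖ = 1) :
    Lp E p μ ≃ₗᵢ[𝕜] Lp E p μ :=
  { unimodularSMulₗᵢ E p hm hm1 with
    invFun := unimodularSMulₗᵢ E p hm.inv₀ (hm1.mono fun x hx => by simp [hx])
    left_inv := unimodularSMulₗᵢ_leftInverse _ _ _ _ <|
      hm1.mono fun x hx => inv_mul_cancel₀ (norm_ne_zero_iff.mp (by simp [hx]))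
    right_inv := unimodularSMulₗᵢ_leftInverse _ _ _ _ <|
      hm1.mono fun x hx => mul_inv_cancel₀ (norm_ne_zero_iff.mp (by simp [hx])) }

theorem coeFn_unimodularSMul (hm : AEStronglyMeasurable m μ) (hm1 : ∀ᵐ x ∂μ, ‖m x‖ = 1)
    (ξ : Lp E p μ) : unimodularSMul E p hm hm1 ξ =ᵐ[μ] m • ⇑ξ :=
  coeFn_unimodularSMulₗᵢ hm hm1 ξ

end UnimodularSMul

section RightTranslation

variable {G 𝕜 E : Type*} [MeasurableSpace G] [Group G] [MeasurableMul G] {ν : Measure G}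
  [ν.IsMulRightInvariant] [NormedField 𝕜] [NormedAddCommGroup E] [NormedSpace 𝕜 E]
  {p : ℝ≥0∞}

theorem apply_apply_eq_smul_apply_mul {ω : G → G → 𝕜}
    (hω : ∀ g h k, ω g h * ω (g * h) k = ω g (h * k) * ω h k) {ρ : G → Lp E p ν → Lp E p ν}
    (hρ : ∀ g ξ, ρ g ξ =ᵐ[ν] fun s => ω g⁻¹ s⁻¹ • ξ (s * g)) (g h : G) (ξ : Lp E p ν) :
    ρ g (ρ h ξ) = ω h⁻¹ g⁻¹ • ρ (g * h) ξ := by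
  have hρh : (fun s => ρ h ξ (s * g)) =ᵐ[ν] fun s => ω h⁻¹ (s * g)⁻¹ • ξ (s * g * h) :=
    (measurePreserving_mul_right ν g).quasiMeasurePreserving.ae_eq_comp (hρ h ξ)
  ext1
  filter_upwards [hρ g (ρ h ξ), hρh, Lp.coeFn_smul (ω h⁻¹ g⁻¹) (ρ (g * h) ξ), hρ (g * h) ξ]
    with s hgh hh hsmul hgh'
  rw [hgh, hh, hsmul, Pi.smul_apply, hgh', smul_smul, smul_smul, mul_assoc, mul_inv_rev,
    mul_inv_rev, hω, mul_comm]

variable [Fact (1 ≤ p)]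

variable (𝕜 E ν p) in
noncomputable def rightTranslate (g : G) : Lp E p ν ≃ₗᵢ[𝕜] Lp E p ν :=
  { DistribMulAction.toLinearEquiv 𝕜 (Lp E p ν) (DomMulAct.mk (MulOpposite.op g)) with
    norm_map' := DomMulAct.norm_smul_Lp _ }

variable (𝕜) in
theorem coeFn_rightTranslate (g : G) (ξ : Lp E p ν) :
    rightTranslate 𝕜 E ν p g ξ =ᵐ[ν] fun s => ξ (s * g) :=
  DomMulAct.smul_Lp_ae_eq _ ξ

theorem existsUnique_ae_eq_smul_comp_mul_right {m : G → 𝕜} (hm : AEStronglyMeasurable m ν)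
    (hm1 : ∀ᵐ s ∂ν, ‖m s‖ = 1) (g : G) :
    ∃! U : Lp E p ν ≃ₗᵢ[𝕜] Lp E p ν, ∀ ξ : Lp E p ν, U ξ =ᵐ[ν] fun s => m s • ξ (s * g) := by
  have hU (ξ : Lp E p ν) : (rightTranslate 𝕜 E ν p g).trans (unimodularSMul E p hm hm1) ξ
      =ᵐ[ν] fun s => m s • ξ (s * g) := by
    filter_upwards [coeFn_unimodularSMul hm hm1 (rightTranslate 𝕜 E ν p g ξ),
      coeFn_rightTranslate 𝕜 g ξ] with s hs hs'
    rw [LinearIsometryEquiv.trans_apply, hs, Pi.smul_apply', hs']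
  refine ⟨_, hU, fun V hV => LinearIsometryEquiv.ext fun ξ => ?_⟩
  exact Lp.ext ((hV ξ).trans (hU ξ).symm)

end RightTranslation

end MeasureTheory.Lp

theorem stmt_6_general {G : Type*} [TopologicalSpace G] [Group G] [IsTopologicalGroup G]
    [MeasurableSpace G] [BorelSpace G]
    (ν : Measure G) [ν.IsMulRightInvariant]
    (ω : G → G → ℂ)
    (hmeas : Measurable fun p : G × G => ω p.1 p.2)
    (habs : ∀ g h : G, ‖ω g h‖ = 1)
    (hcoc : ∀ g h k : G, ω g h * ω (g * h) k = ω g (h * k) * ω h k) :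
    (∀ g : G, ∃! U : Lp ℂ 2 ν ≃ₗᵢ[ℂ] Lp ℂ 2 ν,
      ∀ ξ : Lp ℂ 2 ν, (U ξ : G → ℂ) =ᵐ[ν] fun s => ω g⁻¹ s⁻¹ * ξ (s * g)) ∧
    (∀ rho : G → (Lp ℂ 2 ν ≃ₗᵢ[ℂ] Lp ℂ 2 ν),
      (∀ (g : G) (ξ : Lp ℂ 2 ν), (rho g ξ : G → ℂ) =ᵐ[ν] fun s => ω g⁻¹ s⁻¹ * ξ (s * g)) →
      ∀ (g h : G) (ξ : Lp ℂ 2 ν), rho g (rho h ξ) = ω h⁻¹ g⁻¹ • rho (g * h) ξ) :=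
  ⟨fun g => Lp.existsUnique_ae_eq_smul_comp_mul_right
      (hmeas.comp (measurable_const.prodMk measurable_inv)).aestronglyMeasurable
      (.of_forall fun s => habs g⁻¹ s⁻¹) g,
    fun _ hrho => Lp.apply_apply_eq_smul_apply_mul hcoc hrho⟩

/-- Let `G` be a second countable locally compact Hausdorff group with a right Haar measure `ν`
(a nonzero right-invariant Radon measure) and `ω` a Borel `𝕋`-valued 2-cocycle on `G`. Then for
every `g ∈ G` there is a unique unitary `ρ^{ω̃}_g` on `L²(G,ν)` with
`(ρ^{ω̃}_g ξ)(s) = ω(g⁻¹,s⁻¹)·ξ(sg)` a.e., and any such family satisfies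
`ρ^{ω̃}_g ∘ ρ^{ω̃}_h = ω̃(g,h)·ρ^{ω̃}_{gh}` where `ω̃(g,h) = ω(h⁻¹,g⁻¹)`. -/
theorem stmt_6 {G : Type*} [TopologicalSpace G] [Group G] [IsTopologicalGroup G]
    [SecondCountableTopology G] [LocallyCompactSpace G] [T2Space G]
    [MeasurableSpace G] [BorelSpace G]
    (ν : Measure G) [ν.IsMulRightInvariant] [ν.Regular] (hν : ν ≠ 0)
    (ω : G → G → ℂ)
    (hmeas : Measurable fun p : G × G => ω p.1 p.2)
    (habs : ∀ g h : G, ‖ω g h‖ = 1)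
    (hcoc : ∀ g h k : G, ω g h * ω (g * h) k = ω g (h * k) * ω h k) :
    (∀ g : G, ∃! U : Lp ℂ 2 ν ≃ₗᵢ[ℂ] Lp ℂ 2 ν,
      ∀ ξ : Lp ℂ 2 ν, (U ξ : G → ℂ) =ᵐ[ν] fun s => ω g⁻¹ s⁻¹ * ξ (s * g)) ∧
    (∀ rho : G → (Lp ℂ 2 ν ≃ₗᵢ[ℂ] Lp ℂ 2 ν),
      (∀ (g : G) (ξ : Lp ℂ 2 ν), (rho g ξ : G → ℂ) =ᵐ[ν] fun s => ω g⁻¹ s⁻¹ * ξ (s * g)) →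
      ∀ (g h : G) (ξ : Lp ℂ 2 ν), rho g (rho h ξ) = ω h⁻¹ g⁻¹ • rho (g * h) ξ) :=
  stmt_6_general ν ω hmeas habs hcoc
end

section
/- Let G be a second countable locally compact Hausdorff topological group with left Haar measure μ and let ω be a Borel 2-cocycle on G. On L²(G×G, μ×μ) define U by (Uξ)(s,t) = ω(t⁻¹s,s⁻¹)·ξ(s,s⁻¹t). Then U is a well-defined unitary operator, and for every g ∈ G one has U ∘ L_g ∘ U* = Λ_g, where L_g is the unitary (L_g ξ)(s,t) = ξ(g⁻¹s,t) and Λ_g is the unitary (Λ_g ξ)(s,t) = ω(s⁻¹,g)·\overline{ω(t⁻¹,g)}·ξ(g⁻¹s,g⁻¹t). (In the notation of the paper: Wω̃(λ_g⊗1)ω̃*W* = λ^ω_g ⊗ λ^{ω̄}_g.) -/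
/-!
`U` is the weighted composition operator `ξ ↦ c · (ξ ∘ T)` for the Haar-measure-preserving shear
`T (s, t) = (s, s⁻¹t)` and a unimodular weight `c`, hence unitary; `L_g` and `Λ_g` are of the
same kind, with `T` a left translation. The identity `U L_g U* = Λ_g` is checked as
`U L_g = Λ_g U`: both sides send `ξ` to a multiple of `ξ (g⁻¹s, s⁻¹t)`, and the two weights agree
by the cocycle identity at `(t⁻¹s, s⁻¹, g)`.
-/

open MeasureTheory
open scoped ENNReal ComplexConjugate

namespace MeasureTheory

variable {α β E : Type*} [MeasurableSpace α] [MeasurableSpace β] {μ : Measure α} {ν : Measure β}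
  [NormedAddCommGroup E] {p : ℝ≥0∞}

theorem MemLp.smul_of_norm_eq_one {𝕜 : Type*} [NormedField 𝕜]
    [NormedSpace 𝕜 E] {c : α → 𝕜} (hc : AEStronglyMeasurable c μ) (hc1 : ∀ x, ‖c x‖ = 1)
    {f : α → E} (hf : MemLp f p μ) : MemLp (c • f) p μ :=
  hf.congr_norm (hc.smul hf.1) (.of_forall fun x => by simp [norm_smul, hc1])

namespace Lp

variable [Fact (1 ≤ p)]

section CompMeasurePreserving

variable (𝕜 : Type*) [NormedRing 𝕜] [Module 𝕜 E] [IsBoundedSMul 𝕜 E]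

noncomputable def compMeasurePreservingEquiv (T : α ≃ᵐ β) (hT : MeasurePreserving T μ ν) :
    Lp E p ν ≃ₗᵢ[𝕜] Lp E p μ :=
  { compMeasurePreservingₗᵢ 𝕜 T hT with
    invFun := compMeasurePreserving T.symm (hT.symm T)
    left_inv := fun ξ => by
      change compMeasurePreserving T.symm _ (compMeasurePreserving T hT ξ) = ξ
      rw [← compMeasurePreserving_comp_apply]
      simp
    right_inv := fun ξ => by
      change compMeasurePreserving T hT (compMeasurePreserving T.symm _ ξ) = ξ
      rw [← compMeasurePreserving_comp_apply]
      simp }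

theorem coeFn_compMeasurePreservingEquiv (T : α ≃ᵐ β) (hT : MeasurePreserving T μ ν)
    (ξ : Lp E p ν) : compMeasurePreservingEquiv 𝕜 T hT ξ =ᵐ[μ] ξ ∘ T :=
  coeFn_compMeasurePreserving ξ hT

end CompMeasurePreserving

section SMulUnimodular

variable {𝕜 : Type*} [RCLike 𝕜] [NormedSpace 𝕜 E] {c : α → 𝕜}

noncomputable def smulUnimodularₗᵢ (c : α → 𝕜) (hc : AEStronglyMeasurable c μ)
    (hc1 : ∀ x, ‖c x‖ = 1) : Lp E p μ →ₗᵢ[𝕜] Lp E p μ where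
  toFun ξ := ((Lp.memLp ξ).smul_of_norm_eq_one hc hc1).toLp (c • ξ)
  map_add' ξ η := by
    rw [← MemLp.toLp_add]
    apply MemLp.toLp_congr
    filter_upwards [Lp.coeFn_add ξ η] with x hx
    simp only [Pi.smul_apply', Pi.add_apply, hx, smul_add]
  map_smul' a ξ := by
    rw [RingHom.id_apply, ← MemLp.toLp_const_smul]
    apply MemLp.toLp_congr
    filter_upwards [Lp.coeFn_smul a ξ] with x hx
    simp [hx, smul_comm (c x) a]
  norm_map' ξ := by
    simp only [LinearMap.coe_mk, AddHom.coe_mk, Lp.norm_def]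
    rw [eLpNorm_congr_ae (MemLp.coeFn_toLp _)]
    congr 1
    exact eLpNorm_congr_norm_ae (.of_forall fun x => by simp [norm_smul, hc1])

theorem coeFn_smulUnimodularₗᵢ (hc : AEStronglyMeasurable c μ) (hc1 : ∀ x, ‖c x‖ = 1)
    (ξ : Lp E p μ) : smulUnimodularₗᵢ c hc hc1 ξ =ᵐ[μ] c • ξ :=
  MemLp.coeFn_toLp ((Lp.memLp ξ).smul_of_norm_eq_one hc hc1)

theorem smulUnimodularₗᵢ_smulUnimodularₗᵢ {d : α → 𝕜} (hc : AEStronglyMeasurable c μ)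
    (hc1 : ∀ x, ‖c x‖ = 1) (hd : AEStronglyMeasurable d μ) (hd1 : ∀ x, ‖d x‖ = 1)
    (hdc : ∀ x, d x * c x = 1) (ξ : Lp E p μ) :
    smulUnimodularₗᵢ d hd hd1 (smulUnimodularₗᵢ c hc hc1 ξ) = ξ := by
  apply Lp.ext
  filter_upwards [coeFn_smulUnimodularₗᵢ hd hd1 (smulUnimodularₗᵢ c hc hc1 ξ),
    coeFn_smulUnimodularₗᵢ hc hc1 ξ] with x hdx hcx
  simp only [Pi.smul_apply'] at hdx hcx
  rw [hdx, hcx, smul_smul, hdc, one_smul]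

noncomputable def smulUnimodular (c : α → 𝕜) (hc : AEStronglyMeasurable c μ)
    (hc1 : ∀ x, ‖c x‖ = 1) : Lp E p μ ≃ₗᵢ[𝕜] Lp E p μ :=
  have hc' : AEStronglyMeasurable (fun x => conj (c x)) μ :=
    RCLike.continuous_conj.comp_aestronglyMeasurable hc
  have hc1' (x : α) : ‖conj (c x)‖ = 1 := (RCLike.norm_conj _).trans (hc1 x)
  { smulUnimodularₗᵢ c hc hc1 with
    invFun := smulUnimodularₗᵢ (fun x => conj (c x)) hc' hc1'
    left_inv := smulUnimodularₗᵢ_smulUnimodularₗᵢ hc hc1 hc' hc1' fun x => by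
      rw [RCLike.conj_mul, hc1, RCLike.ofReal_one, one_pow]
    right_inv := smulUnimodularₗᵢ_smulUnimodularₗᵢ hc' hc1' hc hc1 fun x => by
      rw [RCLike.mul_conj, hc1, RCLike.ofReal_one, one_pow] }

theorem coeFn_smulUnimodular (hc : AEStronglyMeasurable c μ) (hc1 : ∀ x, ‖c x‖ = 1)
    (ξ : Lp E p μ) : smulUnimodular c hc hc1 ξ =ᵐ[μ] c • ξ :=
  coeFn_smulUnimodularₗᵢ hc hc1 ξ

noncomputable def weightedCompEquiv (c : α → 𝕜) (hc : AEStronglyMeasurable c μ)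
    (hc1 : ∀ x, ‖c x‖ = 1) (T : α ≃ᵐ β) (hT : MeasurePreserving T μ ν) :
    Lp E p ν ≃ₗᵢ[𝕜] Lp E p μ :=
  (compMeasurePreservingEquiv 𝕜 T hT).trans (smulUnimodular c hc hc1)

theorem coeFn_weightedCompEquiv (hc : AEStronglyMeasurable c μ) (hc1 : ∀ x, ‖c x‖ = 1)
    (T : α ≃ᵐ β) (hT : MeasurePreserving T μ ν) (ξ : Lp E p ν) :
    weightedCompEquiv c hc hc1 T hT ξ =ᵐ[μ] fun x => c x • ξ (T x) := by
  filter_upwards [coeFn_smulUnimodular hc hc1 (compMeasurePreservingEquiv 𝕜 T hT ξ),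
    coeFn_compMeasurePreservingEquiv 𝕜 T hT ξ] with x hcx hTx
  exact hcx.trans (by rw [Pi.smul_apply', hTx, Function.comp_apply])

end SMulUnimodular

end Lp

end MeasureTheory

section TwistedRegular

variable {G : Type*} [Group G]

theorem cocycle_shear_eq_twist_mul {ω : G → G → ℂ} (habs : ∀ g h : G, ‖ω g h‖ = 1)
    (hcoc : ∀ g h k : G, ω g h * ω (g * h) k = ω g (h * k) * ω h k) (g s t : G) :
    ω (t⁻¹ * s) s⁻¹ = ω s⁻¹ g * conj (ω t⁻¹ g) * ω (t⁻¹ * s) (s⁻¹ * g) := by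
  have h := hcoc (t⁻¹ * s) s⁻¹ g
  rw [mul_inv_cancel_right] at h
  have hunit : ω t⁻¹ g * conj (ω t⁻¹ g) = 1 := by
    rw [RCLike.mul_conj, habs, RCLike.ofReal_one, one_pow]
  calc ω (t⁻¹ * s) s⁻¹ = ω (t⁻¹ * s) s⁻¹ * ω t⁻¹ g * conj (ω t⁻¹ g) := by
        rw [mul_assoc, hunit, mul_one]
    _ = ω s⁻¹ g * conj (ω t⁻¹ g) * ω (t⁻¹ * s) (s⁻¹ * g) := by
        rw [h]; ring

variable [MeasurableSpace G] [MeasurableMul₂ G] {μ : Measure G} [SFinite μ] [μ.IsMulLeftInvariant]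
  {p : ℝ≥0∞}

theorem exists_left_translation_unitary [Fact (1 ≤ p)] (g : G) :
    ∃ L : Lp ℂ p (μ.prod μ) ≃ₗᵢ[ℂ] Lp ℂ p (μ.prod μ), ∀ ξ, (L ξ : G × G → ℂ) =ᵐ[μ.prod μ]
      fun q => ξ (g⁻¹ * q.1, q.2) :=
  ⟨_, Lp.coeFn_compMeasurePreservingEquiv ℂ ((MeasurableEquiv.mulLeft g⁻¹).prodCongr (.refl G))
    ((measurePreserving_mul_left μ g⁻¹).prod (.id μ))⟩

variable [MeasurableInv G]

section Unitaries

variable [Fact (1 ≤ p)]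

theorem exists_shear_unitary {ω : G → G → ℂ} (hmeas : Measurable fun q : G × G => ω q.1 q.2)
    (habs : ∀ g h : G, ‖ω g h‖ = 1) :
    ∃ U : Lp ℂ p (μ.prod μ) ≃ₗᵢ[ℂ] Lp ℂ p (μ.prod μ), ∀ ξ, (U ξ : G × G → ℂ) =ᵐ[μ.prod μ]
      fun q => ω (q.2⁻¹ * q.1) q.1⁻¹ * ξ (q.1, q.1⁻¹ * q.2) :=
  have hc : AEStronglyMeasurable (fun q : G × G => ω (q.2⁻¹ * q.1) q.1⁻¹) (μ.prod μ) :=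
    Measurable.aestronglyMeasurable <|
      hmeas.comp ((measurable_snd.inv.mul measurable_fst).prodMk measurable_fst.inv)
  ⟨_, Lp.coeFn_weightedCompEquiv hc (fun _ => habs _ _) (MeasurableEquiv.shearMulRight G).symm
    (measurePreserving_prod_inv_mul μ μ)⟩

theorem exists_twisted_translation_unitary {ω : G → G → ℂ}
    (hmeas : Measurable fun q : G × G => ω q.1 q.2) (habs : ∀ g h : G, ‖ω g h‖ = 1) (g : G) :
    ∃ Λ : Lp ℂ p (μ.prod μ) ≃ₗᵢ[ℂ] Lp ℂ p (μ.prod μ), ∀ ξ, (Λ ξ : G × G → ℂ) =ᵐ[μ.prod μ]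
      fun q => ω q.1⁻¹ g * conj (ω q.2⁻¹ g) * ξ (g⁻¹ * q.1, g⁻¹ * q.2) :=
  have hω (f : G × G → G) (hf : Measurable f) : Measurable fun q => ω (f q) g :=
    hmeas.comp (hf.prodMk measurable_const)
  have hc : AEStronglyMeasurable (fun q : G × G => ω q.1⁻¹ g * conj (ω q.2⁻¹ g)) (μ.prod μ) :=
    ((hω _ measurable_fst.inv).mul
      (Complex.continuous_conj.measurable.comp (hω _ measurable_snd.inv))).aestronglyMeasurable
  have hc1 (q : G × G) : ‖ω q.1⁻¹ g * conj (ω q.2⁻¹ g)‖ = 1 := by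
    rw [norm_mul, RCLike.norm_conj, habs, habs, mul_one]
  ⟨_, Lp.coeFn_weightedCompEquiv hc hc1
    ((MeasurableEquiv.mulLeft g⁻¹).prodCongr (MeasurableEquiv.mulLeft g⁻¹))
    ((measurePreserving_mul_left μ g⁻¹).prod (measurePreserving_mul_left μ g⁻¹))⟩

end Unitaries

theorem shear_intertwines_twist {ω : G → G → ℂ} (habs : ∀ g h : G, ‖ω g h‖ = 1)
    (hcoc : ∀ g h k : G, ω g h * ω (g * h) k = ω g (h * k) * ω h k) (g : G)
    {U L Λ : Lp ℂ p (μ.prod μ) → Lp ℂ p (μ.prod μ)}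
    (hU : ∀ ξ, (U ξ : G × G → ℂ) =ᵐ[μ.prod μ]
      fun q => ω (q.2⁻¹ * q.1) q.1⁻¹ * ξ (q.1, q.1⁻¹ * q.2))
    (hL : ∀ ξ, (L ξ : G × G → ℂ) =ᵐ[μ.prod μ] fun q => ξ (g⁻¹ * q.1, q.2))
    (hΛ : ∀ ξ, (Λ ξ : G × G → ℂ) =ᵐ[μ.prod μ]
      fun q => ω q.1⁻¹ g * conj (ω q.2⁻¹ g) * ξ (g⁻¹ * q.1, g⁻¹ * q.2))
    (ξ : Lp ℂ p (μ.prod μ)) : U (L ξ) = Λ (U ξ) := by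
  have hshear := (measurePreserving_prod_inv_mul μ μ).quasiMeasurePreserving
  have htransl := ((measurePreserving_mul_left μ g⁻¹).prod
    (measurePreserving_mul_left μ g⁻¹)).quasiMeasurePreserving
  apply Lp.ext
  filter_upwards [hU (L ξ), hshear.ae_eq_comp (hL ξ), hΛ (U ξ), htransl.ae_eq_comp (hU ξ)]
    with ⟨s, t⟩ hUL hL' hΛU hU'
  simp only [Function.comp_apply, Prod.map_apply] at hL' hU'
  rw [hUL, hL', hΛU, hU', cocycle_shear_eq_twist_mul habs hcoc g s t]
  simp only [mul_inv_rev, inv_inv, mul_assoc, mul_inv_cancel_left]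

end TwistedRegular

theorem stmt_8_general {G : Type*} [TopologicalSpace G] [Group G] [IsTopologicalGroup G]
    [SecondCountableTopology G] [LocallyCompactSpace G]
    [MeasurableSpace G] [BorelSpace G]
    (μ : Measure G) [μ.IsHaarMeasure]
    (ω : G → G → ℂ)
    (hmeas : Measurable fun p : G × G => ω p.1 p.2)
    (habs : ∀ g h : G, ‖ω g h‖ = 1)
    (hcoc : ∀ g h k : G, ω g h * ω (g * h) k = ω g (h * k) * ω h k) :
    ∃ U : Lp ℂ 2 (μ.prod μ) ≃ₗᵢ[ℂ] Lp ℂ 2 (μ.prod μ),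
      (∀ ξ : Lp ℂ 2 (μ.prod μ), (U ξ : G × G → ℂ) =ᵐ[μ.prod μ]
        fun p => ω (p.2⁻¹ * p.1) p.1⁻¹ * ξ (p.1, p.1⁻¹ * p.2)) ∧
      ∀ g : G,
        (∃ L : Lp ℂ 2 (μ.prod μ) ≃ₗᵢ[ℂ] Lp ℂ 2 (μ.prod μ),
          ∀ ξ : Lp ℂ 2 (μ.prod μ), (L ξ : G × G → ℂ) =ᵐ[μ.prod μ]
            fun p => ξ (g⁻¹ * p.1, p.2)) ∧
        (∃ Lam : Lp ℂ 2 (μ.prod μ) ≃ₗᵢ[ℂ] Lp ℂ 2 (μ.prod μ),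
          ∀ ξ : Lp ℂ 2 (μ.prod μ), (Lam ξ : G × G → ℂ) =ᵐ[μ.prod μ]
            fun p => ω p.1⁻¹ g * starRingEnd ℂ (ω p.2⁻¹ g) * ξ (g⁻¹ * p.1, g⁻¹ * p.2)) ∧
        (∀ L Lam : Lp ℂ 2 (μ.prod μ) ≃ₗᵢ[ℂ] Lp ℂ 2 (μ.prod μ),
          (∀ ξ : Lp ℂ 2 (μ.prod μ), (L ξ : G × G → ℂ) =ᵐ[μ.prod μ]
            fun p => ξ (g⁻¹ * p.1, p.2)) →
          (∀ ξ : Lp ℂ 2 (μ.prod μ), (Lam ξ : G × G → ℂ) =ᵐ[μ.prod μ]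
            fun p => ω p.1⁻¹ g * starRingEnd ℂ (ω p.2⁻¹ g) * ξ (g⁻¹ * p.1, g⁻¹ * p.2)) →
          ∀ ξ : Lp ℂ 2 (μ.prod μ), U (L (U.symm ξ)) = Lam ξ) := by
  obtain ⟨U, hU⟩ := exists_shear_unitary (μ := μ) (p := 2) hmeas habs
  refine ⟨U, hU, fun g => ⟨exists_left_translation_unitary g,
    exists_twisted_translation_unitary hmeas habs g, fun L Lam hL hLam ξ => ?_⟩⟩
  simpa only [LinearIsometryEquiv.apply_symm_apply] using
    shear_intertwines_twist habs hcoc g hU hL hLam (U.symm ξ)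

/-- On `L²(G×G)` define `U` by `(Uξ)(s,t) = ω(t⁻¹s,s⁻¹)·ξ(s,s⁻¹t)`. Then `U` is a well-defined
unitary and `U ∘ L_g ∘ U* = Λ_g` for every `g`, where `(L_g ξ)(s,t) = ξ(g⁻¹s,t)` and
`(Λ_g ξ)(s,t) = ω(s⁻¹,g)·conj(ω(t⁻¹,g))·ξ(g⁻¹s,g⁻¹t)`.
(In the paper's notation: `Wω̃(λ_g⊗1)ω̃*W* = λ^ω_g ⊗ λ^{ω̄}_g`.) -/
theorem stmt_8 {G : Type*} [TopologicalSpace G] [Group G] [IsTopologicalGroup G]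
    [SecondCountableTopology G] [LocallyCompactSpace G] [T2Space G]
    [MeasurableSpace G] [BorelSpace G]
    (μ : Measure G) [μ.IsHaarMeasure]
    (ω : G → G → ℂ)
    (hmeas : Measurable fun p : G × G => ω p.1 p.2)
    (habs : ∀ g h : G, ‖ω g h‖ = 1)
    (hcoc : ∀ g h k : G, ω g h * ω (g * h) k = ω g (h * k) * ω h k) :
    ∃ U : Lp ℂ 2 (μ.prod μ) ≃ₗᵢ[ℂ] Lp ℂ 2 (μ.prod μ),
      (∀ ξ : Lp ℂ 2 (μ.prod μ), (U ξ : G × G → ℂ) =ᵐ[μ.prod μ]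
        fun p => ω (p.2⁻¹ * p.1) p.1⁻¹ * ξ (p.1, p.1⁻¹ * p.2)) ∧
      ∀ g : G,
        (∃ L : Lp ℂ 2 (μ.prod μ) ≃ₗᵢ[ℂ] Lp ℂ 2 (μ.prod μ),
          ∀ ξ : Lp ℂ 2 (μ.prod μ), (L ξ : G × G → ℂ) =ᵐ[μ.prod μ]
            fun p => ξ (g⁻¹ * p.1, p.2)) ∧
        (∃ Lam : Lp ℂ 2 (μ.prod μ) ≃ₗᵢ[ℂ] Lp ℂ 2 (μ.prod μ),
          ∀ ξ : Lp ℂ 2 (μ.prod μ), (Lam ξ : G × G → ℂ) =ᵐ[μ.prod μ]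
            fun p => ω p.1⁻¹ g * starRingEnd ℂ (ω p.2⁻¹ g) * ξ (g⁻¹ * p.1, g⁻¹ * p.2)) ∧
        (∀ L Lam : Lp ℂ 2 (μ.prod μ) ≃ₗᵢ[ℂ] Lp ℂ 2 (μ.prod μ),
          (∀ ξ : Lp ℂ 2 (μ.prod μ), (L ξ : G × G → ℂ) =ᵐ[μ.prod μ]
            fun p => ξ (g⁻¹ * p.1, p.2)) →
          (∀ ξ : Lp ℂ 2 (μ.prod μ), (Lam ξ : G × G → ℂ) =ᵐ[μ.prod μ]
            fun p => ω p.1⁻¹ g * starRingEnd ℂ (ω p.2⁻¹ g) * ξ (g⁻¹ * p.1, g⁻¹ * p.2)) →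
          ∀ ξ : Lp ℂ 2 (μ.prod μ), U (L (U.symm ξ)) = Lam ξ) :=
  stmt_8_general μ ω hmeas habs hcoc
end

section
/- Let G be a second countable locally compact Hausdorff topological group with left Haar measure μ and let ω be a Borel 2-cocycle on G. On L²(G×G, μ×μ) let U be the unitary (Uξ)(s,t) = ω(t⁻¹s,s⁻¹)·ξ(s,s⁻¹t), and for g ∈ G let B̃_g be the map sending ξ to the function (s,t) ↦ \overline{ω(g⁻¹,t⁻¹)}·ξ(s,tg). Then each B̃_g is a well-defined bounded linear operator on L²(G×G, μ×μ) and U ∘ B̃_g = B̃_g ∘ U for all g ∈ G. (In the notation of the paper: Wω̃ commutes with 1 ⊗ ρ^{\overline{ω̃}}_g.) -/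
/-!
Both operators are weighted composition operators `ξ ↦ m · (ξ ∘ e)` on `L²(G × G)`: `U` with the
shear `e (s, t) = (s, s⁻¹t)`, which preserves `μ × μ`, and `B̃_g` with `e (s, t) = (s, tg)`, which
scales `μ × μ` by the modular function `Δ(g)`. Two such operators commute as soon as their maps
commute and their weights satisfy `m₁ · (m₂ ∘ e₁) = m₂ · (m₁ ∘ e₂)`; for `U` and `B̃_g` this is the
cocycle identity at `(g⁻¹, t⁻¹s, s⁻¹)`, rearranged using `|ω| = 1`. `U` is unitary because the
weighted composition operator with map `e⁻¹` and weight `conj (m ∘ e⁻¹)` is a right inverse of it.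
-/

open MeasureTheory
open scoped NNReal ENNReal ComplexConjugate

namespace MeasureTheory

section WeightedComposition

variable {α : Type*} [MeasurableSpace α] {ν : Measure α} {𝕜 : Type*} {E : Type*}
  [NormedAddCommGroup E] {p : ℝ≥0∞}

def IsWeightedComp [SMul 𝕜 E] (T : Lp E p ν → Lp E p ν) (m : α → 𝕜) (e : α → α) : Prop :=
  ∀ ξ : Lp E p ν, (T ξ : α → E) =ᵐ[ν] fun x => m x • ξ (e x)

theorem Measure.QuasiMeasurePreserving.of_map_eq_smul {e : α → α} (he : Measurable e) {c : ℝ≥0}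
    (hmap : ν.map e = c • ν) : Measure.QuasiMeasurePreserving e ν ν :=
  ⟨he, Measure.absolutelyContinuous_of_le_smul (c := c) (by rw [hmap]; rfl)⟩

variable [NormedField 𝕜] [NormedSpace 𝕜 E] {T T₁ T₂ : Lp E p ν → Lp E p ν}
  {m m₁ m₂ : α → 𝕜} {e e₁ e₂ : α → α}

theorem isWeightedComp_id : IsWeightedComp (id : Lp E p ν → Lp E p ν) (1 : α → 𝕜) id :=
  fun _ => .of_forall fun _ => (one_smul 𝕜 _).symm

theorem IsWeightedComp.comp (h₁ : IsWeightedComp T₁ m₁ e₁) (h₂ : IsWeightedComp T₂ m₂ e₂)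
    (he₁ : Measure.QuasiMeasurePreserving e₁ ν ν) :
    IsWeightedComp (T₁ ∘ T₂) (fun x => m₁ x * m₂ (e₁ x)) (e₂ ∘ e₁) := fun ξ => by
  filter_upwards [h₁ (T₂ ξ), he₁.ae (h₂ ξ)] with x hx₁ hx₂
  simp only [Function.comp_apply, hx₁, hx₂, mul_smul]

theorem IsWeightedComp.unique {T' : Lp E p ν → Lp E p ν} {m' : α → 𝕜} {e' : α → α}
    (h : IsWeightedComp T m e) (h' : IsWeightedComp T' m' e') (hm : m =ᵐ[ν] m')
    (he : ∀ᵐ x ∂ν, e x = e' x) : T = T' :=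
  funext fun ξ => Lp.ext <| by
    filter_upwards [h ξ, h' ξ, hm, he] with x hx hx' hmx hex
    rw [hx, hx', hmx, hex]

theorem IsWeightedComp.comm (h₁ : IsWeightedComp T₁ m₁ e₁) (h₂ : IsWeightedComp T₂ m₂ e₂)
    (he₁ : Measure.QuasiMeasurePreserving e₁ ν ν) (he₂ : Measure.QuasiMeasurePreserving e₂ ν ν)
    (hm : ∀ᵐ x ∂ν, m₁ x * m₂ (e₁ x) = m₂ x * m₁ (e₂ x)) (he : ∀ᵐ x ∂ν, e₂ (e₁ x) = e₁ (e₂ x)) :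
    T₁ ∘ T₂ = T₂ ∘ T₁ :=
  (h₁.comp h₂ he₁).unique (h₂.comp h₁ he₂) hm he

theorem eLpNorm_weightedComp {e : α → α} (he : Measurable e) {c : ℝ≥0} (hc : c ≠ 0)
    (hmap : ν.map e = c • ν) (hm1 : ∀ x, ‖m x‖ = 1) {f : α → E} (hf : AEStronglyMeasurable f ν) :
    eLpNorm (fun x => m x • f (e x)) p ν = (c ^ p.toReal⁻¹ : ℝ≥0) * eLpNorm f p ν := by
  have hf' : AEStronglyMeasurable f (ν.map e) :=
    hf.mono_ac (Measure.QuasiMeasurePreserving.of_map_eq_smul he hmap).2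
  calc eLpNorm (fun x => m x • f (e x)) p ν = eLpNorm (f ∘ e) p ν :=
        eLpNorm_congr_norm_ae (.of_forall fun x => by simp [norm_smul, hm1])
    _ = eLpNorm f p (ν.map e) := (eLpNorm_map_measure hf' he.aemeasurable).symm
    _ = (c ^ p.toReal⁻¹ : ℝ≥0) * eLpNorm f p ν := by
      rw [hmap, eLpNorm_smul_measure_of_ne_zero' hc, ENNReal.smul_def, smul_eq_mul]

theorem exists_isWeightedComp [Fact (1 ≤ p)] {e : α → α} (he : Measurable e) {c : ℝ≥0}
    (hc : c ≠ 0) (hmap : ν.map e = c • ν) (hm : AEStronglyMeasurable m ν) (hm1 : ∀ x, ‖m x‖ = 1) :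
    ∃ T : Lp E p ν →L[𝕜] Lp E p ν,
      IsWeightedComp T m e ∧ ∀ ξ, ‖T ξ‖ = (c ^ p.toReal⁻¹ : ℝ≥0) * ‖ξ‖ := by
  have hqmp := Measure.QuasiMeasurePreserving.of_map_eq_smul he hmap
  have hmem (ξ : Lp E p ν) : MemLp (fun x => m x • ξ (e x)) p ν := by
    refine ⟨hm.smul ((Lp.aestronglyMeasurable ξ).comp_quasiMeasurePreserving hqmp), ?_⟩
    rw [eLpNorm_weightedComp he hc hmap hm1 (Lp.aestronglyMeasurable ξ)]
    exact ENNReal.mul_lt_top ENNReal.coe_lt_top (Lp.eLpNorm_lt_top ξ)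
  let T : Lp E p ν →ₗ[𝕜] Lp E p ν :=
    { toFun ξ := (hmem ξ).toLp _
      map_add' ξ η := Lp.ext <| by
        filter_upwards [(hmem (ξ + η)).coeFn_toLp, (hmem ξ).coeFn_toLp, (hmem η).coeFn_toLp,
          Lp.coeFn_add ((hmem ξ).toLp _) ((hmem η).toLp _), hqmp.ae (Lp.coeFn_add ξ η)]
          with x h h₁ h₂ h₃ h₄
        simp only [h, h₃, h₁, h₂, h₄, Pi.add_apply, smul_add]
      map_smul' a ξ := Lp.ext <| by
        filter_upwards [(hmem (a • ξ)).coeFn_toLp, (hmem ξ).coeFn_toLp,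
          Lp.coeFn_smul a ((hmem ξ).toLp _), hqmp.ae (Lp.coeFn_smul a ξ)] with x h h₁ h₂ h₃
        simp only [h, h₂, h₁, h₃, Pi.smul_apply, RingHom.id_apply, smul_comm (m x) a] }
  have hT : IsWeightedComp T m e := fun ξ => (hmem ξ).coeFn_toLp
  have hTnorm (ξ : Lp E p ν) : ‖T ξ‖ = (c ^ p.toReal⁻¹ : ℝ≥0) * ‖ξ‖ := by
    rw [Lp.norm_def, Lp.norm_def, eLpNorm_congr_ae (hT ξ),
      eLpNorm_weightedComp he hc hmap hm1 (Lp.aestronglyMeasurable ξ), ENNReal.toReal_mul,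
      ENNReal.coe_toReal]
  exact ⟨T.mkContinuous _ fun ξ => (hTnorm ξ).le, hT, hTnorm⟩

theorem exists_linearIsometryEquiv_isWeightedComp [Fact (1 ≤ p)] {𝕜 : Type*} [RCLike 𝕜]
    [NormedSpace 𝕜 E] (e : α ≃ᵐ α) (he : MeasurePreserving e ν ν) {m : α → 𝕜}
    (hm : AEStronglyMeasurable m ν) (hm1 : ∀ x, ‖m x‖ = 1) :
    ∃ U : Lp E p ν ≃ₗᵢ[𝕜] Lp E p ν, IsWeightedComp U m e := by
  have hmap {e' : α → α} (he' : MeasurePreserving e' ν ν) : ν.map e' = (1 : ℝ≥0) • ν := by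
    rw [he'.map_eq, one_smul]
  obtain ⟨T, hT, hTnorm⟩ :=
    exists_isWeightedComp (E := E) (p := p) e.measurable one_ne_zero (hmap he) hm hm1
  obtain ⟨T', hT', -⟩ := exists_isWeightedComp (E := E) (p := p) e.symm.measurable one_ne_zero
    (hmap he.symm) (hm.comp_quasiMeasurePreserving he.symm.quasiMeasurePreserving).star
    (m := fun x => conj (m (e.symm x))) (by simp [hm1])
  have hTT' : T ∘ T' = id := (hT.comp hT' he.quasiMeasurePreserving).unique isWeightedComp_id
    (.of_forall fun x => by simp [RCLike.mul_conj, hm1]) (.of_forall fun x => by simp)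
  let V : Lp E p ν →ₗᵢ[𝕜] Lp E p ν := ⟨T, fun ξ => (hTnorm ξ).trans (by simp)⟩
  exact ⟨.ofSurjective V fun ξ => ⟨T' ξ, congrFun hTT' ξ⟩, hT⟩

end WeightedComposition

end MeasureTheory

theorem cocycle_mul_conj {G : Type*} [Group G] {ω : G → G → ℂ} (habs : ∀ g h, ‖ω g h‖ = 1)
    (hcoc : ∀ g h k, ω g h * ω (g * h) k = ω g (h * k) * ω h k) (a b c : G) :
    ω b c * conj (ω a b) = conj (ω a (b * c)) * ω (a * b) c := by
  have hab : ω a b * conj (ω a b) = 1 := by simp [RCLike.mul_conj, habs]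
  have habc : ω a (b * c) * conj (ω a (b * c)) = 1 := by simp [RCLike.mul_conj, habs]
  linear_combination conj (ω a (b * c)) * ω (a * b) c * hab - ω b c * conj (ω a b) * habc
    - conj (ω a b) * conj (ω a (b * c)) * hcoc a b c

namespace MeasureTheory.Measure

theorem map_prodMk_mul_right_eq_smul {β G : Type*} [MeasurableSpace β] [TopologicalSpace G]
    [Group G] [IsTopologicalGroup G] [LocallyCompactSpace G] [MeasurableSpace G] [BorelSpace G]
    (ν : Measure β) [SFinite ν] (μ : Measure G) [IsHaarMeasure μ] [SFinite μ] [InnerRegular μ]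
    (g : G) :
    (ν.prod μ).map (fun p => (p.1, p.2 * g)) = modularCharacterFun g • ν.prod μ := by
  rw [← prod_smul_right, ← map_right_mul_eq_modularCharacterFun_smul, ← map_id (μ := ν),
    map_prod_map _ _ measurable_id (measurable_mul_const g), map_id]
  rfl

end MeasureTheory.Measure

theorem stmt_11_general {G : Type*} [TopologicalSpace G] [Group G] [IsTopologicalGroup G]
    [SecondCountableTopology G] [LocallyCompactSpace G]
    [MeasurableSpace G] [BorelSpace G]
    (μ : Measure G) [μ.IsHaarMeasure]
    (ω : G → G → ℂ)
    (hmeas : Measurable fun p : G × G => ω p.1 p.2)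
    (habs : ∀ g h : G, ‖ω g h‖ = 1)
    (hcoc : ∀ g h k : G, ω g h * ω (g * h) k = ω g (h * k) * ω h k) :
    ∃ U : Lp ℂ 2 (μ.prod μ) ≃ₗᵢ[ℂ] Lp ℂ 2 (μ.prod μ),
      (∀ ξ : Lp ℂ 2 (μ.prod μ), (U ξ : G × G → ℂ) =ᵐ[μ.prod μ]
        fun p => ω (p.2⁻¹ * p.1) p.1⁻¹ * ξ (p.1, p.1⁻¹ * p.2)) ∧
      ∀ g : G,
        (∃ B : Lp ℂ 2 (μ.prod μ) →L[ℂ] Lp ℂ 2 (μ.prod μ),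
          ∀ ξ : Lp ℂ 2 (μ.prod μ), (B ξ : G × G → ℂ) =ᵐ[μ.prod μ]
            fun p => starRingEnd ℂ (ω g⁻¹ p.2⁻¹) * ξ (p.1, p.2 * g)) ∧
        (∀ B : Lp ℂ 2 (μ.prod μ) →L[ℂ] Lp ℂ 2 (μ.prod μ),
          (∀ ξ : Lp ℂ 2 (μ.prod μ), (B ξ : G × G → ℂ) =ᵐ[μ.prod μ]
            fun p => starRingEnd ℂ (ω g⁻¹ p.2⁻¹) * ξ (p.1, p.2 * g)) →
          ∀ ξ : Lp ℂ 2 (μ.prod μ), U (B ξ) = B (U ξ)) := by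
  have hmU : AEStronglyMeasurable (fun p : G × G => ω (p.2⁻¹ * p.1) p.1⁻¹) (μ.prod μ) :=
    (hmeas.comp ((measurable_snd.inv.mul measurable_fst).prodMk
      measurable_fst.inv)).aestronglyMeasurable
  obtain ⟨U, hU⟩ := exists_linearIsometryEquiv_isWeightedComp (E := ℂ) (p := 2)
    (MeasurableEquiv.shearMulRight G).symm (measurePreserving_prod_inv_mul μ μ) hmU
    fun _ => habs _ _
  refine ⟨U, hU, fun g => ?_⟩
  have hshear (p : G × G) : (MeasurableEquiv.shearMulRight G).symm p = (p.1, p.1⁻¹ * p.2) := rfl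
  have hmap := Measure.map_prodMk_mul_right_eq_smul μ μ g
  have heB : Measurable fun p : G × G => (p.1, p.2 * g) :=
    measurable_fst.prodMk (measurable_snd.mul_const g)
  have hmB : AEStronglyMeasurable (fun p : G × G => conj (ω g⁻¹ p.2⁻¹)) (μ.prod μ) :=
    (hmeas.comp (measurable_const.prodMk measurable_snd.inv)).aestronglyMeasurable.star
  obtain ⟨B, hB, -⟩ := exists_isWeightedComp (E := ℂ) (p := 2) heB
    (Measure.modularCharacterFun_pos g).ne' hmap hmB (by simp [habs])
  refine ⟨⟨B, hB⟩, fun B hB ξ => congrFun (hU.comm hB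
    (measurePreserving_prod_inv_mul μ μ).quasiMeasurePreserving
    (.of_map_eq_smul heB hmap) (.of_forall fun p => ?_) (.of_forall fun p => ?_)) ξ⟩
  · simpa [hshear, mul_assoc] using cocycle_mul_conj habs hcoc g⁻¹ (p.2⁻¹ * p.1) p.1⁻¹
  · simp [hshear, mul_assoc]

/-- On `L²(G×G)` let `U` be the unitary `(Uξ)(s,t) = ω(t⁻¹s,s⁻¹)·ξ(s,s⁻¹t)` and for `g ∈ G`
let `B̃_g` send `ξ` to `(s,t) ↦ conj(ω(g⁻¹,t⁻¹))·ξ(s,tg)`. Then each `B̃_g` is a well-defined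
bounded linear operator on `L²(G×G)` and `U ∘ B̃_g = B̃_g ∘ U` for all `g`.
(In the paper's notation: `Wω̃` commutes with `1 ⊗ ρ^{conj(ω̃)}_g`.) -/
theorem stmt_11 {G : Type*} [TopologicalSpace G] [Group G] [IsTopologicalGroup G]
    [SecondCountableTopology G] [LocallyCompactSpace G] [T2Space G]
    [MeasurableSpace G] [BorelSpace G]
    (μ : Measure G) [μ.IsHaarMeasure]
    (ω : G → G → ℂ)
    (hmeas : Measurable fun p : G × G => ω p.1 p.2)
    (habs : ∀ g h : G, ‖ω g h‖ = 1)
    (hcoc : ∀ g h k : G, ω g h * ω (g * h) k = ω g (h * k) * ω h k) :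
    ∃ U : Lp ℂ 2 (μ.prod μ) ≃ₗᵢ[ℂ] Lp ℂ 2 (μ.prod μ),
      (∀ ξ : Lp ℂ 2 (μ.prod μ), (U ξ : G × G → ℂ) =ᵐ[μ.prod μ]
        fun p => ω (p.2⁻¹ * p.1) p.1⁻¹ * ξ (p.1, p.1⁻¹ * p.2)) ∧
      ∀ g : G,
        (∃ B : Lp ℂ 2 (μ.prod μ) →L[ℂ] Lp ℂ 2 (μ.prod μ),
          ∀ ξ : Lp ℂ 2 (μ.prod μ), (B ξ : G × G → ℂ) =ᵐ[μ.prod μ]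
            fun p => starRingEnd ℂ (ω g⁻¹ p.2⁻¹) * ξ (p.1, p.2 * g)) ∧
        (∀ B : Lp ℂ 2 (μ.prod μ) →L[ℂ] Lp ℂ 2 (μ.prod μ),
          (∀ ξ : Lp ℂ 2 (μ.prod μ), (B ξ : G × G → ℂ) =ᵐ[μ.prod μ]
            fun p => starRingEnd ℂ (ω g⁻¹ p.2⁻¹) * ξ (p.1, p.2 * g)) →
          ∀ ξ : Lp ℂ 2 (μ.prod μ), U (B ξ) = B (U ξ)) :=
  stmt_11_general μ ω hmeas habs hcoc
end

section
/- Let G be a second countable locally compact Hausdorff topological group with left Haar measure μ, let ω₁ and ω₂ be Borel 2-cocycles on G, and let v : G → 𝕋 be a Borel function such that ω₁(h⁻¹,g⁻¹) = ω₂(h⁻¹,g⁻¹)·v(g)·v(h)·\overline{v(gh)} for all g,h ∈ G. For i = 1,2 let U_i be the unitary on L²(G×G, μ×μ) given by (U_i ξ)(s,t) = ω_i(t⁻¹s,s⁻¹)·ξ(s,s⁻¹t), let M_v, M_{v̄} denote the unitary multiplication operators on L²(G,μ) by v and by \overline{v}, and let M_v⊗M_{v̄} and 1⊗M_v denote the corresponding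 multiplication operators on L²(G×G, μ×μ), i.e. ((M_v⊗M_{v̄})ξ)(s,t) = v(s)\overline{v(t)}ξ(s,t) and ((1⊗M_v)ξ)(s,t) = v(t)ξ(s,t). Then U₁ = (M_v⊗M_{v̄}) ∘ U₂ ∘ (1⊗M_v). -/
open MeasureTheory

/-! Pointwise, `(P U₂ Q ξ)(s,t) = v(s) v̄(t) ω₂(t⁻¹s, s⁻¹) v(s⁻¹t) ξ(s, s⁻¹t)`, and the coboundary
relation at `g = s`, `h = s⁻¹t` turns the scalar factor into `ω₁(t⁻¹s, s⁻¹)`. The only measure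
theory needed is that `Q ξ` may be evaluated at `(s, s⁻¹t)` almost everywhere, which holds because
the shear `(s, t) ↦ (s, s⁻¹t)` preserves `μ × μ`. -/

theorem cohomologous_apply_shear {G R : Type*} [Group G] [CommSemiring R] [StarRing R]
    {ω₁ ω₂ : G → G → R} {v : G → R}
    (hcohom : ∀ g h : G, ω₁ h⁻¹ g⁻¹ = ω₂ h⁻¹ g⁻¹ * v g * v h * starRingEnd R (v (g * h)))
    (s t : G) :
    ω₁ (t⁻¹ * s) s⁻¹ = v s * starRingEnd R (v t) * ω₂ (t⁻¹ * s) s⁻¹ * v (s⁻¹ * t) := by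
  have key := hcohom s (s⁻¹ * t)
  simp only [mul_inv_rev, inv_inv, mul_inv_cancel_left] at key
  rw [key]
  ring

theorem ae_eq_comp_shear {G E : Type*} [MeasurableSpace G] [Group G] [MeasurableMul₂ G]
    [MeasurableInv G] {μ ν : Measure G} [SFinite μ] [SFinite ν] [ν.IsMulLeftInvariant]
    {f g : G × G → E} (hfg : f =ᵐ[μ.prod ν] g) :
    (fun p : G × G => f (p.1, p.1⁻¹ * p.2)) =ᵐ[μ.prod ν] fun p => g (p.1, p.1⁻¹ * p.2) :=
  (measurePreserving_prod_inv_mul μ ν).quasiMeasurePreserving.ae_eq hfg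

theorem stmt_12_general {G : Type*} [TopologicalSpace G] [Group G] [IsTopologicalGroup G]
    [SecondCountableTopology G] [LocallyCompactSpace G]
    [MeasurableSpace G] [BorelSpace G]
    (μ : Measure G) [μ.IsHaarMeasure]
    (ω₁ ω₂ : G → G → ℂ)
    (v : G → ℂ)
    (hcohom : ∀ g h : G, ω₁ h⁻¹ g⁻¹ = ω₂ h⁻¹ g⁻¹ * v g * v h * starRingEnd ℂ (v (g * h)))
    (U₁ U₂ P Q : Lp ℂ 2 (μ.prod μ) ≃ₗᵢ[ℂ] Lp ℂ 2 (μ.prod μ))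
    (hU₁ : ∀ ξ : Lp ℂ 2 (μ.prod μ), (U₁ ξ : G × G → ℂ) =ᵐ[μ.prod μ]
      fun p => ω₁ (p.2⁻¹ * p.1) p.1⁻¹ * ξ (p.1, p.1⁻¹ * p.2))
    (hU₂ : ∀ ξ : Lp ℂ 2 (μ.prod μ), (U₂ ξ : G × G → ℂ) =ᵐ[μ.prod μ]
      fun p => ω₂ (p.2⁻¹ * p.1) p.1⁻¹ * ξ (p.1, p.1⁻¹ * p.2))
    (hP : ∀ ξ : Lp ℂ 2 (μ.prod μ), (P ξ : G × G → ℂ) =ᵐ[μ.prod μ]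
      fun p => v p.1 * starRingEnd ℂ (v p.2) * ξ p)
    (hQ : ∀ ξ : Lp ℂ 2 (μ.prod μ), (Q ξ : G × G → ℂ) =ᵐ[μ.prod μ]
      fun p => v p.2 * ξ p) :
    ∀ ξ : Lp ℂ 2 (μ.prod μ), U₁ ξ = P (U₂ (Q ξ)) := by
  intro ξ
  refine Lp.ext ?_
  filter_upwards [hU₁ ξ, hP (U₂ (Q ξ)), hU₂ (Q ξ), ae_eq_comp_shear (hQ ξ)]
    with p hU₁p hPp hU₂p hQp
  rw [hU₁p, hPp, hU₂p, hQp, cohomologous_apply_shear hcohom]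
  ring

/-- Let `ω₁, ω₂` be Borel 2-cocycles on `G` and `v : G → 𝕋` Borel with
`ω₁(h⁻¹,g⁻¹) = ω₂(h⁻¹,g⁻¹)·v(g)·v(h)·conj(v(gh))`. For `i = 1,2` let `U_i` be the unitary on
`L²(G×G)` with `(U_i ξ)(s,t) = ω_i(t⁻¹s,s⁻¹)·ξ(s,s⁻¹t)`, let `P = M_v ⊗ M_{v̄}` be the
multiplication operator `(Pξ)(s,t) = v(s)·conj(v(t))·ξ(s,t)` and `Q = 1 ⊗ M_v` the
multiplication operator `(Qξ)(s,t) = v(t)·ξ(s,t)`. Then `U₁ = P ∘ U₂ ∘ Q`. -/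
theorem stmt_12 {G : Type*} [TopologicalSpace G] [Group G] [IsTopologicalGroup G]
    [SecondCountableTopology G] [LocallyCompactSpace G] [T2Space G]
    [MeasurableSpace G] [BorelSpace G]
    (μ : Measure G) [μ.IsHaarMeasure]
    (ω₁ ω₂ : G → G → ℂ)
    (hmeas₁ : Measurable fun p : G × G => ω₁ p.1 p.2)
    (habs₁ : ∀ g h : G, ‖ω₁ g h‖ = 1)
    (hcoc₁ : ∀ g h k : G, ω₁ g h * ω₁ (g * h) k = ω₁ g (h * k) * ω₁ h k)
    (hmeas₂ : Measurable fun p : G × G => ω₂ p.1 p.2)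
    (habs₂ : ∀ g h : G, ‖ω₂ g h‖ = 1)
    (hcoc₂ : ∀ g h k : G, ω₂ g h * ω₂ (g * h) k = ω₂ g (h * k) * ω₂ h k)
    (v : G → ℂ) (hvmeas : Measurable v) (hvabs : ∀ g : G, ‖v g‖ = 1)
    (hcohom : ∀ g h : G, ω₁ h⁻¹ g⁻¹ = ω₂ h⁻¹ g⁻¹ * v g * v h * starRingEnd ℂ (v (g * h)))
    (U₁ U₂ P Q : Lp ℂ 2 (μ.prod μ) ≃ₗᵢ[ℂ] Lp ℂ 2 (μ.prod μ))
    (hU₁ : ∀ ξ : Lp ℂ 2 (μ.prod μ), (U₁ ξ : G × G → ℂ) =ᵐ[μ.prod μ]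
      fun p => ω₁ (p.2⁻¹ * p.1) p.1⁻¹ * ξ (p.1, p.1⁻¹ * p.2))
    (hU₂ : ∀ ξ : Lp ℂ 2 (μ.prod μ), (U₂ ξ : G × G → ℂ) =ᵐ[μ.prod μ]
      fun p => ω₂ (p.2⁻¹ * p.1) p.1⁻¹ * ξ (p.1, p.1⁻¹ * p.2))
    (hP : ∀ ξ : Lp ℂ 2 (μ.prod μ), (P ξ : G × G → ℂ) =ᵐ[μ.prod μ]
      fun p => v p.1 * starRingEnd ℂ (v p.2) * ξ p)
    (hQ : ∀ ξ : Lp ℂ 2 (μ.prod μ), (Q ξ : G × G → ℂ) =ᵐ[μ.prod μ]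
      fun p => v p.2 * ξ p) :
    ∀ ξ : Lp ℂ 2 (μ.prod μ), U₁ ξ = P (U₂ (Q ξ)) :=
  stmt_12_general μ ω₁ ω₂ v hcohom U₁ U₂ P Q hU₁ hU₂ hP hQ
end

section
/- Let G be a group with identity e, H a subgroup of G, and c : G × G → ℝ an ℝ-valued 2-cocycle, i.e. c(g,h) + c(gh,k) = c(g,hk) + c(h,k) for all g,h,k ∈ G. Let b₀ : H → ℝ satisfy c(h,h′) = b₀(h) + b₀(h′) − b₀(hh′) for all h,h′ ∈ H. Let s : G → G be a function such that s(g)⁻¹g ∈ H for all g ∈ G, s(gh) = s(g) for all g ∈ G and h ∈ H, and s(e) = e. Define b : G → ℝ by b(g) = b₀(s(g)⁻¹g) − c(s(g), s(g)⁻¹g) + b₀(e). Then c(g,h) = b(g) + b(h) − b(gh) for all g ∈ G and h ∈ H. -/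
/-- Let `G` be a group, `H ≤ G`, and `c : G × G → ℝ` a 2-cocycle. Let `b₀` satisfy
`c(h,h′) = b₀(h) + b₀(h′) − b₀(hh′)` on `H`, and let `s : G → G` be a section of the quotient
map (i.e. `s(g)⁻¹g ∈ H`, `s(gh) = s(g)` for `h ∈ H`, `s(e) = e`). Define
`b(g) = b₀(s(g)⁻¹g) − c(s(g), s(g)⁻¹g) + b₀(e)`. Then `c(g,h) = b(g) + b(h) − b(gh)`
for all `g ∈ G` and `h ∈ H`. -/
theorem stmt_14 {G : Type*} [Group G] (H : Subgroup G)
    (c : G → G → ℝ)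
    (hcoc : ∀ g h k : G, c g h + c (g * h) k = c g (h * k) + c h k)
    (b₀ : G → ℝ)
    (hb₀ : ∀ h h' : G, h ∈ H → h' ∈ H → c h h' = b₀ h + b₀ h' - b₀ (h * h'))
    (s : G → G)
    (hsH : ∀ g : G, (s g)⁻¹ * g ∈ H)
    (hs : ∀ (g h : G), h ∈ H → s (g * h) = s g)
    (hse : s 1 = 1)
    (b : G → ℝ)
    (hb : ∀ g : G, b g = b₀ ((s g)⁻¹ * g) - c (s g) ((s g)⁻¹ * g) + b₀ 1) :
    ∀ g h : G, h ∈ H → c g h = b g + b h - b (g * h) := by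
  intro g h hh
  have hsh : s h = 1 := by simpa [hse] using hs 1 h hh
  have hsgh : s (g * h) = s g := hs g h hh
  have hu : (s g)⁻¹ * g ∈ H := hsH g
  have h1 : c 1 h = c 1 1 := by
    have := hcoc 1 1 h
    simp only [one_mul] at this
    linarith
  have h11 : c 1 1 = b₀ 1 := by
    have := hb₀ 1 1 (one_mem H) (one_mem H)
    simpa using this
  have hcuh := hb₀ _ h hu hh
  have hc3 := hcoc (s g) ((s g)⁻¹ * g) h
  have e1 : s g * ((s g)⁻¹ * g) = g := by group
  have e2 : (s g)⁻¹ * (g * h) = ((s g)⁻¹ * g) * h := by group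
  rw [e1] at hc3
  rw [hb g, hb h, hb (g * h), hsh, hsgh, e2]
  simp only [inv_one, one_mul]
  linarith
end

section
/- Let n be a natural number, h > 0 a real number, and let V = ℝ^{2n} be Euclidean space with inner product ⟨·,·⟩ and Lebesgue measure. Let J : V → V be a linear isometry with J² = −1 (a compatible complex structure). Then for every x ∈ V one has (h/(2π))^n · ∫_V e^{−i(h/2)⟨s,Jx⟩} · e^{−h(‖s−x‖² + ‖s‖²)/4} ds = e^{−h‖x‖²/4}. (This expresses that the vacuum vector ξ₀(s) = (h/2π)^{n/2} e^{−h‖s‖²/4} satisfies ⟨λ^ω_x ξ₀, ξ₀⟩ = e^{−h‖x‖²/4} for the Weyl operators λ^ω_x associated with the cocycle ω(x,y) = e^{(ih/2)⟨x,Jy⟩}.) -/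
open MeasureTheory Complex Real

/-!
Translating `s ↦ s + x/2` completes the square in the real Gaussian: the integrand becomes
`e^{-h‖x‖²/8}` times `e^{-(h/2)‖t‖² - i(h/2)⟨Jx,t⟩}` (the phase `⟨x/2, Jx⟩` vanishes since `J` is
skew). The latter is a Fourier transform of a Gaussian and integrates to
`(2π/h)^n e^{-h‖Jx‖²/8} = (2π/h)^n e^{-h‖x‖²/8}`.
-/

lemma norm_add_half_smul_sub_sq_add_sq {V : Type*} [NormedAddCommGroup V] [InnerProductSpace ℝ V]
    (t x : V) :
    ‖t + (1 / 2 : ℝ) • x - x‖ ^ 2 + ‖t + (1 / 2 : ℝ) • x‖ ^ 2 = 2 * ‖t‖ ^ 2 + ‖x‖ ^ 2 / 2 := by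
  have hsub : t + (1 / 2 : ℝ) • x - x = t - (1 / 2 : ℝ) • x := by module
  rw [hsub, norm_sub_sq_real, norm_add_sq_real, norm_smul, Real.norm_of_nonneg (by norm_num)]
  ring

lemma integral_cexp_inner_mul_rexp_norm_sub_sq_add_sq {V : Type*} [NormedAddCommGroup V]
    [InnerProductSpace ℝ V] [FiniteDimensional ℝ V] [MeasurableSpace V] [BorelSpace V]
    {h : ℝ} (hh : 0 < h) (x y : V) :
    ∫ s : V, cexp (-I * ((h / 2 * inner ℝ s y : ℝ) : ℂ)) *
        (Real.exp (-(h * (‖s - x‖ ^ 2 + ‖s‖ ^ 2)) / 4) : ℂ) =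
      (π / (h / 2) : ℂ) ^ (Module.finrank ℝ V / 2 : ℂ) *
        cexp (-I * (h / 4 * inner ℝ x y : ℝ) - (h * (‖x‖ ^ 2 + ‖y‖ ^ 2) / 8 : ℝ)) := by
  rw [← integral_add_right_eq_self _ ((1 / 2 : ℝ) • x)]
  have hpt : ∀ t : V, cexp (-I * ((h / 2 * inner ℝ (t + (1 / 2 : ℝ) • x) y : ℝ) : ℂ)) *
        (Real.exp (-(h * (‖t + (1 / 2 : ℝ) • x - x‖ ^ 2 + ‖t + (1 / 2 : ℝ) • x‖ ^ 2)) / 4) : ℂ) =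
      cexp (-(h / 2 : ℂ) * ‖t‖ ^ 2 + (-I * (h / 2 : ℂ)) * inner ℝ y t) *
        cexp (-I * (h / 4 * inner ℝ x y : ℝ) - (h * ‖x‖ ^ 2 / 8 : ℝ)) := by
    intro t
    rw [norm_add_half_smul_sub_sq_add_sq, inner_add_left, real_inner_smul_left, real_inner_comm y t,
      ofReal_exp, ← Complex.exp_add, ← Complex.exp_add]
    congr 1
    push_cast
    ring
  have hb : 0 < (h / 2 : ℂ).re := by simpa using hh
  simp_rw [hpt]
  rw [integral_mul_const, GaussianFourier.integral_cexp_neg_mul_sq_norm_add hb, mul_assoc,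
    ← Complex.exp_add, mul_pow, neg_sq, I_sq]
  congr 2
  have : (h : ℂ) ≠ 0 := by exact_mod_cast hh.ne'
  push_cast
  field_simp
  ring

lemma real_inner_self_apply_eq_zero_of_apply_apply_eq_neg {V : Type*} [NormedAddCommGroup V]
    [InnerProductSpace ℝ V] (J : V ≃ₗᵢ[ℝ] V) (hJ : ∀ v, J (J v) = -v) (v : V) :
    inner ℝ v (J v) = 0 := by
  have h := J.inner_map_map v (J v)
  rw [hJ, inner_neg_right, real_inner_comm] at h
  linarith

lemma cpow_half_finrank_euclideanSpace (n : ℕ) (z : ℂ) :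
    z ^ ((Module.finrank ℝ (EuclideanSpace ℝ (Fin (2 * n))) : ℂ) / 2) = z ^ n := by
  rw [finrank_euclideanSpace_fin, ← cpow_natCast]
  push_cast
  ring_nf

/-- Vacuum expectation of Weyl operators: let `V = ℝ^{2n}` with a compatible complex structure
`J` (`J` a linear isometry with `J² = −1`) and `h > 0`. Then for every `x ∈ V`,
`(h/(2π))^n ∫_V e^{−i(h/2)⟨s,Jx⟩} e^{−h(‖s−x‖² + ‖s‖²)/4} ds = e^{−h‖x‖²/4}`. -/
theorem stmt_16 (n : ℕ) (h : ℝ) (hh : 0 < h)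
    (J : EuclideanSpace ℝ (Fin (2 * n)) ≃ₗᵢ[ℝ] EuclideanSpace ℝ (Fin (2 * n)))
    (hJ : ∀ v : EuclideanSpace ℝ (Fin (2 * n)), J (J v) = -v) :
    ∀ x : EuclideanSpace ℝ (Fin (2 * n)),
      (((h / (2 * Real.pi)) ^ n : ℝ) : ℂ) *
        ∫ s : EuclideanSpace ℝ (Fin (2 * n)),
          Complex.exp (-Complex.I * (((h / 2) * (inner ℝ s (J x) : ℝ) : ℝ) : ℂ)) *
            ((Real.exp (-(h * (‖s - x‖ ^ 2 + ‖s‖ ^ 2)) / 4) : ℝ) : ℂ) =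
      ((Real.exp (-(h * ‖x‖ ^ 2) / 4) : ℝ) : ℂ) := by
  intro x
  rw [integral_cexp_inner_mul_rexp_norm_sub_sq_add_sq hh x (J x),
    real_inner_self_apply_eq_zero_of_apply_apply_eq_neg J hJ x, J.norm_map,
    cpow_half_finrank_euclideanSpace, ← mul_assoc]
  have hconst : (((h / (2 * π)) ^ n : ℝ) : ℂ) * (π / (h / 2) : ℂ) ^ n = 1 := by
    have : (π : ℂ) ≠ 0 := by exact_mod_cast pi_ne_zero
    have : (h : ℂ) ≠ 0 := by exact_mod_cast hh.ne'
    push_cast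
    rw [← mul_pow]
    field_simp
    simp
  rw [hconst, one_mul, ofReal_exp]
  congr 1
  push_cast
  ring
end

section
/- Let d be a natural number, h > 0 a real number, E a complex Banach space, and f : ℝ^d → E a bounded continuous function. If the Bochner integral ∫_{ℝ^d} e^{−‖x−y‖²/h} f(x) dx equals 0 for every y ∈ ℝ^d, then f = 0. (Injectivity of Gaussian convolution; this is the key step showing that the maps T̃ and S̃ defined by Gaussian averaging along an action of ℝ^d are injective.) -/
open MeasureTheory Filter Topology Complex
open scoped RealInnerProductSpace FourierTransform

/-!
Completing the square, `e^{-‖x - y‖²/h} = e^{-‖y‖²/h} e^{⟪x, 2y/h⟫} e^{-‖x‖²/h}`, turns the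
hypothesis into the vanishing of every exponential moment `∫ e^{⟪x, η⟫} w(x) dx` of the
Gaussian-damped function `w = e^{-‖x‖²/h} f`. For fixed `ξ`, `z ↦ ∫ e^{z⟪x, ξ⟫} w(x) dx` is entire
(the Gaussian dominates every exponential), and it vanishes on the real axis, hence everywhere;
at `z = -2πi` this says `𝓕 w ξ = 0`. Fourier inversion gives `w = 0`, hence `f = 0`.
-/

theorem Differentiable.eq_zero_of_forall_ofReal_eq_zero {E : Type*} [NormedAddCommGroup E]
    [NormedSpace ℂ E] [CompleteSpace E] {Φ : ℂ → E}
    (hΦ : Differentiable ℂ Φ) (h : ∀ t : ℝ, Φ t = 0) : Φ = 0 := by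
  have hreal : Tendsto ((↑) : ℝ → ℂ) (𝓝[≠] 0) (𝓝[≠] 0) := by
    simpa using Complex.continuous_ofReal.continuousWithinAt.tendsto_nhdsWithin
      (x := (0 : ℝ)) (t := {(0 : ℂ)}ᶜ) fun t ht => by simpa using ht
  funext z
  exact (hΦ.differentiableOn.analyticOnNhd isOpen_univ
    ).eqOn_zero_of_preconnected_of_frequently_eq_zero isPreconnected_univ (Set.mem_univ 0)
    (hreal.frequently (Frequently.of_forall h)) (Set.mem_univ z)

section InnerProductSpace

variable {V : Type*} [NormedAddCommGroup V] [InnerProductSpace ℝ V]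

lemma norm_cexp_mul_inner_le (z : ℂ) (x ξ : V) :
    ‖cexp (z * ⟪x, ξ⟫)‖ ≤ Real.exp (‖z‖ * ‖ξ‖ * ‖x‖) := by
  rw [Complex.norm_exp, Complex.re_mul_ofReal]
  refine Real.exp_le_exp.2 ?_
  calc z.re * ⟪x, ξ⟫ ≤ |z.re| * |⟪x, ξ⟫| := by rw [← abs_mul]; exact le_abs_self _
    _ ≤ ‖z‖ * (‖x‖ * ‖ξ‖) := by
      gcongr
      exacts [Complex.abs_re_le_norm z, abs_real_inner_le_norm x ξ]
    _ = ‖z‖ * ‖ξ‖ * ‖x‖ := by ring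

lemma exp_neg_norm_sub_half_smul_sq_div {h : ℝ} (hh : h ≠ 0) (x η : V) :
    Real.exp (-‖x - (h / 2) • η‖ ^ 2 / h)
      = Real.exp (-‖(h / 2) • η‖ ^ 2 / h) * (Real.exp ⟪x, η⟫ * Real.exp (-‖x‖ ^ 2 / h)) := by
  rw [← Real.exp_add, ← Real.exp_add, norm_sub_sq_real, real_inner_smul_right]
  congr 1
  field_simp
  ring

end InnerProductSpace

section FiniteDimensional

variable {V : Type*} [NormedAddCommGroup V] [InnerProductSpace ℝ V] [FiniteDimensional ℝ V]
  [MeasurableSpace V] [BorelSpace V]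
  {E : Type*} [NormedAddCommGroup E] [NormedSpace ℂ E]

lemma integrable_exp_mul_norm_mul_exp_neg_sq_norm_div {h : ℝ} (hh : 0 < h) (a : ℝ) :
    Integrable fun x : V => Real.exp (a * ‖x‖) * Real.exp (-‖x‖ ^ 2 / h) := by
  have hgauss : Integrable fun x : V => Real.exp (-(2 * h)⁻¹ * ‖x‖ ^ 2) := by
    refine (GaussianFourier.integrable_cexp_neg_mul_sq_norm_add (V := V) (b := ((2 * h)⁻¹ : ℝ))
      (by simpa using hh) 0 0).norm.congr (ae_of_all _ fun x => ?_)
    simp [Complex.norm_exp, ← Complex.ofReal_pow]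
  refine (hgauss.const_mul (Real.exp (a ^ 2 * h / 2))).mono' (by fun_prop)
    (ae_of_all _ fun x => ?_)
  rw [Real.norm_of_nonneg (by positivity), ← Real.exp_add, ← Real.exp_add]
  refine Real.exp_le_exp.2 (sub_nonneg.1 ?_)
  have hsq : a ^ 2 * h / 2 + -(2 * h)⁻¹ * ‖x‖ ^ 2 - (a * ‖x‖ + -‖x‖ ^ 2 / h)
      = (‖x‖ - a * h) ^ 2 / (2 * h) := by
    field_simp
    ring
  rw [hsq]
  positivity

variable {w : V → E}

lemma integrable_cexp_mul_inner_smul (hw_meas : AEStronglyMeasurable w)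
    (hw : ∀ a : ℝ, Integrable fun x => Real.exp (a * ‖x‖) * ‖w x‖) (z : ℂ) (ξ : V) :
    Integrable fun x => cexp (z * ⟪x, ξ⟫) • w x :=
  (hw (‖z‖ * ‖ξ‖)).mono' ((by fun_prop : Continuous _).aestronglyMeasurable.smul hw_meas)
    (ae_of_all _ fun x => by rw [norm_smul]; gcongr; exact norm_cexp_mul_inner_le z x ξ)

theorem differentiable_integral_cexp_mul_inner_smul (hw_meas : AEStronglyMeasurable w)
    (hw : ∀ a : ℝ, Integrable fun x => Real.exp (a * ‖x‖) * ‖w x‖) (ξ : V) :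
    Differentiable ℂ fun z : ℂ => ∫ x, cexp (z * ⟪x, ξ⟫) • w x := by
  intro z₀
  refine (hasDerivAt_integral_of_dominated_loc_of_deriv_le (μ := volume)
    (F' := fun z x => (cexp (z * ⟪x, ξ⟫) * ⟪x, ξ⟫) • w x)
    (bound := fun x => Real.exp ((‖z₀‖ + 2) * ‖ξ‖ * ‖x‖) * ‖w x‖)
    (Metric.ball_mem_nhds z₀ one_pos)
    (Eventually.of_forall fun z => (integrable_cexp_mul_inner_smul hw_meas hw z ξ).1)
    (integrable_cexp_mul_inner_smul hw_meas hw z₀ ξ)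
    ((by fun_prop : Continuous _).aestronglyMeasurable.smul hw_meas)
    ?_ (hw _) ?_).2.differentiableAt
  · filter_upwards with x z hz_ball
    have hz : ‖z‖ ≤ ‖z₀‖ + 1 := by
      have := norm_sub_norm_le z z₀
      rw [mem_ball_iff_norm] at hz_ball
      linarith
    have hinner : |⟪x, ξ⟫| ≤ Real.exp (‖ξ‖ * ‖x‖) := by
      have := Real.add_one_le_exp (‖ξ‖ * ‖x‖)
      nlinarith [abs_real_inner_le_norm x ξ]
    calc ‖(cexp (z * ⟪x, ξ⟫) * ⟪x, ξ⟫) • w x‖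
        = ‖cexp (z * ⟪x, ξ⟫)‖ * |⟪x, ξ⟫| * ‖w x‖ := by
          rw [norm_smul, norm_mul, Complex.norm_real, Real.norm_eq_abs]
      _ ≤ Real.exp ((‖z₀‖ + 1) * ‖ξ‖ * ‖x‖) * Real.exp (‖ξ‖ * ‖x‖) * ‖w x‖ := by
          gcongr
          exact (norm_cexp_mul_inner_le z x ξ).trans (by gcongr)
      _ = Real.exp ((‖z₀‖ + 2) * ‖ξ‖ * ‖x‖) * ‖w x‖ := by
          rw [← Real.exp_add]; ring_nf
  · filter_upwards with x z _
    simpa using ((hasDerivAt_id z).mul_const (⟪x, ξ⟫ : ℂ)).cexp.smul_const (w x)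

theorem Continuous.eq_zero_of_fourier_eq_zero [CompleteSpace E] (hc : Continuous w)
    (hi : Integrable w) (h : 𝓕 w = 0) : w = 0 := by
  rw [← hc.fourierInv_fourier_eq hi (by rw [h]; exact integrable_zero _ _ _), h]
  ext v
  simp [Real.fourierInv_eq]

theorem eq_zero_of_integral_exp_inner_smul_eq_zero [CompleteSpace E] (hc : Continuous w)
    (hw : ∀ a : ℝ, Integrable fun x => Real.exp (a * ‖x‖) * ‖w x‖)
    (h : ∀ η : V, ∫ x, Real.exp ⟪x, η⟫ • w x = 0) : w = 0 := by
  refine hc.eq_zero_of_fourier_eq_zero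
    ((integrable_norm_iff hc.aestronglyMeasurable).1 (by simpa using hw 0)) (funext fun ξ => ?_)
  have hΦ := (differentiable_integral_cexp_mul_inner_smul hc.aestronglyMeasurable hw ξ
    ).eq_zero_of_forall_ofReal_eq_zero fun t => by
      simpa [real_inner_smul_right, ← Complex.ofReal_mul, ← Complex.ofReal_exp] using h (t • ξ)
  have hΦξ : ∫ x, cexp (-2 * Real.pi * I * ⟪x, ξ⟫) • w x = 0 := congrFun hΦ _
  rw [Real.fourier_eq', Pi.zero_apply, ← hΦξ]
  congr 1 with x
  push_cast
  ring_nf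

lemma integrable_exp_mul_norm_mul_norm_gaussian_smul {h : ℝ} (hh : 0 < h) {f : V → E}
    (hf : Continuous f) {C : ℝ} (hC : ∀ x, ‖f x‖ ≤ C) (a : ℝ) :
    Integrable fun x => Real.exp (a * ‖x‖) * ‖Real.exp (-‖x‖ ^ 2 / h) • f x‖ := by
  refine ((integrable_exp_mul_norm_mul_exp_neg_sq_norm_div hh a).mul_const C).mono'
    (by fun_prop) (ae_of_all _ fun x => ?_)
  rw [norm_smul, Real.norm_of_nonneg (Real.exp_pos _).le, norm_mul, Real.norm_of_nonneg
    (Real.exp_pos _).le, Real.norm_of_nonneg (by positivity), mul_assoc]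
  gcongr
  exact hC x

end FiniteDimensional

/-- Injectivity of Gaussian convolution: if `f : ℝ^d → E` is a bounded continuous function
with values in a complex Banach space and `∫ e^{−‖x−y‖²/h} f(x) dx = 0` for every `y`,
then `f = 0`. -/
theorem stmt_18 (d : ℕ) (h : ℝ) (hh : 0 < h)
    {E : Type*} [NormedAddCommGroup E] [NormedSpace ℂ E] [CompleteSpace E]
    (f : EuclideanSpace ℝ (Fin d) → E)
    (hf : Continuous f) (hbdd : ∃ C : ℝ, ∀ x, ‖f x‖ ≤ C)
    (hint : ∀ y : EuclideanSpace ℝ (Fin d),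
      (∫ x : EuclideanSpace ℝ (Fin d), Real.exp (-‖x - y‖ ^ 2 / h) • f x) = 0) :
    f = 0 := by
  obtain ⟨C, hC⟩ := hbdd
  have hw : (fun x => Real.exp (-‖x‖ ^ 2 / h) • f x) = 0 := by
    refine eq_zero_of_integral_exp_inner_smul_eq_zero (by fun_prop)
      (integrable_exp_mul_norm_mul_norm_gaussian_smul hh hf hC) fun η => ?_
    have hη := hint ((h / 2) • η)
    simp_rw [exp_neg_norm_sub_half_smul_sq_div hh.ne', mul_smul, integral_smul] at hη
    exact (smul_eq_zero.1 hη).resolve_left (Real.exp_ne_zero _)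
  funext x
  simpa [Real.exp_ne_zero] using congrFun hw x
end
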